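/- arXiv:1910.02645 — 5 statements merged into one kernel-verified Lean document; each statement's English description precedes it below -/
import Mathlib

section
/- Let α > 1, c ∈ ℝ, and f ∈ 𝒮(ℝ²) with (∂^k f/∂x^k)(c,y) = 0 for k = 0,…,m where m ≥ α - 2. Define F_α(ξ, η) = f(sgn(ξ)|ξ|^{1/α} + c, η)/(α|ξ|^{(α-1)/α}) for ξ ≠ 0. Then for every N > 0 there exists C_N > 0 such that |F_α(ξ, η)| ≤ C_N (1 + |ξ| + |η|)^{-N} for all ξ ≠ 0 and η ∈ ℝ. -/
/-!
Substituting `x = sgn ξ |ξ|^(1/α)` turns `F_α(ξ, η)` into `f(x + c, η) / (α |x|^(α-1))`, with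
`|ξ| = |x|^α`. For `|x| ≥ 1` the denominator is at least `1` and the Schwartz decay of `f` suffices.
For `|x| ≤ 1`, the vanishing of the first `m` derivatives in `x` gives
`|f(x + c, η)| ≤ sup |∂ₓ^(m+1) f(·, η)| |x|^(m+1)`, the factor `|x|^(m+1) ≤ |x|^(α-1)` absorbs the
denominator, and the decay in `η` comes from that of `∂ₓ^(m+1) f`. Finally
`1 + |ξ| + |η| ≤ 3 (1 + |x| + |η|)^α` turns decay in `(x, η)` into decay in `(ξ, η)`.
-/

open scoped SchwartzMap

section

variable {G F : Type*} [NormedAddCommGroup G] [NormedSpace ℝ G]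
  [NormedAddCommGroup F] [NormedSpace ℝ F]

theorem norm_le_mul_pow_of_iteratedDeriv_eq_zero {n : ℕ} {φ : ℝ → F} (hφ : ContDiff ℝ n φ)
    {c M : ℝ} (hvan : ∀ k < n, iteratedDeriv k φ c = 0)
    (hM : ∀ t, ‖iteratedDeriv n φ t‖ ≤ M) (x : ℝ) : ‖φ (c + x)‖ ≤ M * |x| ^ n := by
  induction n generalizing φ x with
  | zero => simpa using hM (c + x)
  | succ n ih =>
    have hφ' := (contDiff_succ_iff_deriv (n := n)).mp (by exact_mod_cast hφ)
    have hderiv : ∀ s, ‖deriv φ (c + s)‖ ≤ M * |s| ^ n := fun s =>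
      ih hφ'.2.2 (fun k hk => by simpa [iteratedDeriv_succ'] using hvan (k + 1) (by omega))
        (fun t => by simpa [iteratedDeriv_succ'] using hM t) s
    have hM0 : 0 ≤ M := (norm_nonneg _).trans (hM c)
    have hbound : ∀ s ∈ Metric.closedBall c |x|, ‖deriv φ s‖ ≤ M * |x| ^ n := fun s hs => by
      have hsc : |s - c| ≤ |x| := by simpa [Metric.mem_closedBall, Real.dist_eq] using hs
      calc ‖deriv φ s‖ = ‖deriv φ (c + (s - c))‖ := by rw [add_sub_cancel]
        _ ≤ M * |s - c| ^ n := hderiv (s - c)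
        _ ≤ M * |x| ^ n := by gcongr
    have hmvt := (convex_closedBall c |x|).norm_image_sub_le_of_norm_deriv_le
      (fun s _ => hφ'.1 s) hbound (Metric.mem_closedBall_self (abs_nonneg x))
      (by simp [Metric.mem_closedBall] : c + x ∈ Metric.closedBall c |x|)
    have hc : φ c = 0 := by simpa using hvan 0 (by omega)
    calc ‖φ (c + x)‖ = ‖φ (c + x) - φ c‖ := by rw [hc, sub_zero]
      _ ≤ M * |x| ^ n * ‖c + x - c‖ := hmvt
      _ = M * |x| ^ (n + 1) := by rw [add_sub_cancel_left, Real.norm_eq_abs]; ring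

theorem norm_iteratedDeriv_comp_prodMk_le {n : ℕ} {f : ℝ × G → F} (hf : ContDiff ℝ n f)
    (y : G) (t : ℝ) :
    ‖iteratedDeriv n (fun s => f (s, y)) t‖ ≤ ‖iteratedFDeriv ℝ n f (t, y)‖ := by
  have hcomp : (fun s => f (s, y)) = (fun z => f (z + (0, y))) ∘ ContinuousLinearMap.inl ℝ ℝ G := by
    ext s; simp
  have hshift : ContDiff ℝ n fun z => f (z + (0, y)) := hf.comp (contDiff_id.add contDiff_const)
  rw [iteratedDeriv_eq_iteratedFDeriv, hcomp,
    ContinuousLinearMap.iteratedFDeriv_comp_right _ hshift _ le_rfl, iteratedFDeriv_comp_add_right]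
  calc _ = ‖iteratedFDeriv ℝ n f (t, y) fun _ => ((1 : ℝ), (0 : G))‖ := by simp
    _ ≤ ‖iteratedFDeriv ℝ n f (t, y)‖ * ∏ _ : Fin n, ‖((1 : ℝ), (0 : G))‖ :=
        ContinuousMultilinearMap.le_opNorm _ _
    _ = ‖iteratedFDeriv ℝ n f (t, y)‖ := by simp

end

namespace SchwartzMap

variable {E G F : Type*} [NormedAddCommGroup E] [NormedSpace ℝ E]
  [NormedAddCommGroup G] [NormedSpace ℝ G] [NormedAddCommGroup F] [NormedSpace ℝ F]

theorem decay_one_add (f : 𝓢(E, F)) (k n : ℕ) :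
    ∃ C : ℝ, 0 < C ∧ ∀ x, (1 + ‖x‖) ^ k * ‖iteratedFDeriv ℝ n f x‖ ≤ C :=
  ⟨2 ^ k * (Finset.Iic (k, n)).sup (fun m => SchwartzMap.seminorm ℝ m.1 m.2) f + 1,
    by positivity, fun x => (one_add_le_sup_seminorm_apply (m := (k, n)) le_rfl le_rfl f x).trans
      (le_add_of_nonneg_right zero_le_one)⟩

theorem exists_norm_mul_one_add_pow_le_of_iteratedDeriv_eq_zero (g : 𝓢(ℝ × G, F))
    {m : ℕ} (hvan : ∀ k ≤ m, ∀ y, iteratedDeriv k (fun x => g (x, y)) 0 = 0) (K : ℕ) :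
    ∃ C : ℝ, 0 < C ∧ ∀ x η, ‖g (x, η)‖ * (1 + ‖η‖) ^ K ≤ C * |x| ^ (m + 1) := by
  obtain ⟨C, hC, hdecay⟩ := g.decay_one_add K (m + 1)
  refine ⟨C, hC, fun x η => ?_⟩
  have hη : 0 < (1 + ‖η‖) ^ K := by positivity
  have hM : ∀ t, ‖iteratedDeriv (m + 1) (fun s => g (s, η)) t‖ ≤ C / (1 + ‖η‖) ^ K := by
    intro t
    rw [le_div_iff₀ hη]
    calc ‖iteratedDeriv (m + 1) (fun s => g (s, η)) t‖ * (1 + ‖η‖) ^ K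
        ≤ (1 + ‖(t, η)‖) ^ K * ‖iteratedFDeriv ℝ (m + 1) g (t, η)‖ := by
          rw [mul_comm]
          gcongr
          · exact norm_snd_le (t, η)
          · exact norm_iteratedDeriv_comp_prodMk_le (g.smooth (m + 1)) η t
      _ ≤ C := hdecay (t, η)
  have hsmooth : ContDiff ℝ (m + 1 : ℕ) fun s => g (s, η) :=
    (g.smooth _).comp (contDiff_id.prodMk contDiff_const)
  have htaylor := norm_le_mul_pow_of_iteratedDeriv_eq_zero hsmooth
    (fun k hk => hvan k (Nat.lt_succ_iff.mp hk) η) hM x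
  rw [zero_add, div_mul_eq_mul_div, le_div_iff₀ hη] at htaylor
  exact htaylor

theorem exists_norm_mul_one_add_pow_le_rpow_of_iteratedDeriv_eq_zero
    (g : 𝓢(ℝ × G, F)) {m : ℕ} (hvan : ∀ k ≤ m, ∀ y, iteratedDeriv k (fun x => g (x, y)) 0 = 0)
    (K : ℕ) {s : ℝ} (hs₀ : 0 ≤ s) (hs : s ≤ m + 1) :
    ∃ C : ℝ, 0 < C ∧ ∀ x ≠ 0, ∀ η, ‖g (x, η)‖ * (1 + |x| + ‖η‖) ^ K ≤ C * |x| ^ s := by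
  obtain ⟨C₀, hC₀, hfar⟩ := g.decay_one_add K 0
  obtain ⟨C₁, hC₁, hnear⟩ := g.exists_norm_mul_one_add_pow_le_of_iteratedDeriv_eq_zero hvan K
  refine ⟨2 ^ K * max C₀ C₁, by positivity, fun x hx η => ?_⟩
  rcases le_total 1 |x| with hx1 | hx1
  · have hnorm : 1 + |x| + ‖η‖ ≤ 2 * (1 + ‖(x, η)‖) := by
      have hfst : |x| ≤ ‖(x, η)‖ := norm_fst_le (x, η)
      linarith [norm_snd_le (x, η)]
    calc ‖g (x, η)‖ * (1 + |x| + ‖η‖) ^ K ≤ ‖g (x, η)‖ * (2 * (1 + ‖(x, η)‖)) ^ K := by gcongr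
      _ = 2 ^ K * ((1 + ‖(x, η)‖) ^ K * ‖g (x, η)‖) := by rw [mul_pow]; ring
      _ ≤ 2 ^ K * max C₀ C₁ := by
          gcongr
          simpa using (hfar (x, η)).trans (le_max_left C₀ C₁)
      _ ≤ 2 ^ K * max C₀ C₁ * |x| ^ s := le_mul_of_one_le_right (by positivity)
          (Real.one_le_rpow hx1 hs₀)
  · have hpow : |x| ^ (m + 1) ≤ |x| ^ s := by
      rw [← Real.rpow_natCast]
      exact Real.rpow_le_rpow_of_exponent_ge (abs_pos.mpr hx) hx1 (by push_cast; exact hs)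
    calc ‖g (x, η)‖ * (1 + |x| + ‖η‖) ^ K ≤ ‖g (x, η)‖ * (2 * (1 + ‖η‖)) ^ K := by
          gcongr; linarith [norm_nonneg η]
      _ = 2 ^ K * (‖g (x, η)‖ * (1 + ‖η‖) ^ K) := by rw [mul_pow]; ring
      _ ≤ 2 ^ K * (C₁ * |x| ^ (m + 1)) := mul_le_mul_of_nonneg_left (hnear x η) (by positivity)
      _ ≤ 2 ^ K * (max C₀ C₁ * |x| ^ s) := mul_le_mul_of_nonneg_left
          (mul_le_mul (le_max_right _ _) hpow (by positivity) (by positivity)) (by positivity)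
      _ = 2 ^ K * max C₀ C₁ * |x| ^ s := by ring

end SchwartzMap

theorem one_add_rpow_add_le_mul_pow {α N : ℝ} {K : ℕ} (hα : 1 ≤ α) (hN : 0 ≤ N) (hK : α * N ≤ K)
    {u v : ℝ} (hu : 0 ≤ u) (hv : 0 ≤ v) :
    (1 + u ^ α + v) ^ N ≤ 3 ^ N * (1 + u + v) ^ K := by
  set B := 1 + u + v
  have hB : 1 ≤ B := by linarith
  have hBα : B ≤ B ^ α := by
    simpa using Real.rpow_le_rpow_of_exponent_le hB hα
  have hsum : 1 + u ^ α + v ≤ 3 * B ^ α := by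
    have : u ^ α ≤ B ^ α := Real.rpow_le_rpow hu (by linarith) (by linarith)
    linarith
  calc (1 + u ^ α + v) ^ N ≤ (3 * B ^ α) ^ N := by gcongr
    _ = 3 ^ N * B ^ (α * N) := by
        rw [Real.mul_rpow (by norm_num) (by positivity), Real.rpow_mul (by positivity)]
    _ ≤ 3 ^ N * B ^ K := by
        gcongr
        exact_mod_cast Real.rpow_le_rpow_of_exponent_le hB hK

theorem abs_sign_mul_abs_rpow {ξ : ℝ} (hξ : ξ ≠ 0) (r : ℝ) :
    |Real.sign ξ * |ξ| ^ r| = |ξ| ^ r := by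
  rcases Real.sign_apply_eq_of_ne_zero ξ hξ with h | h <;>
    simp [h, abs_of_nonneg (Real.rpow_nonneg (abs_nonneg ξ) r)]

/-- Rapid decay of `F_α`. -/
theorem Falpha_decay (α c : ℝ) (hα : 1 < α) (m : ℕ) (hm : (m : ℝ) ≥ α - 2)
    (f : SchwartzMap (ℝ × ℝ) ℝ)
    (hvan : ∀ k ≤ m, ∀ y : ℝ, iteratedDeriv k (fun x : ℝ => f (x, y)) c = 0)
    (F : ℝ → ℝ → ℝ)
    (hF : ∀ ξ : ℝ, ξ ≠ 0 → ∀ η : ℝ,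
      F ξ η = f (Real.sign ξ * |ξ| ^ (1 / α) + c, η) / (α * |ξ| ^ ((α - 1) / α))) :
    ∀ N : ℝ, 0 < N → ∃ C : ℝ, 0 < C ∧
      ∀ ξ : ℝ, ξ ≠ 0 → ∀ η : ℝ, |F ξ η| ≤ C * (1 + |ξ| + |η|) ^ (-N) := by
  intro N hN
  obtain ⟨K, hK⟩ : ∃ K : ℕ, α * N ≤ K := ⟨⌈α * N⌉₊, Nat.le_ceil _⟩
  set g := SchwartzMap.compSubConstCLM ℝ (-(c, 0)) f
  have hg : ∀ x η, g (x, η) = f (x + c, η) := fun x η => by simp [g]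
  have hvan_g : ∀ k ≤ m, ∀ y, iteratedDeriv k (fun x => g (x, y)) 0 = 0 := fun k hk y => by
    simpa [hg, iteratedDeriv_comp_add_const (f := fun z => f (z, y))] using hvan k hk y
  obtain ⟨C, hC, hbound⟩ := g.exists_norm_mul_one_add_pow_le_rpow_of_iteratedDeriv_eq_zero
    hvan_g K (s := α - 1) (by linarith) (by linarith)
  refine ⟨3 ^ N * C / α, by positivity, fun ξ hξ η => ?_⟩
  set x := Real.sign ξ * |ξ| ^ (1 / α)
  have hx : |x| = |ξ| ^ (1 / α) := abs_sign_mul_abs_rpow hξ _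
  have hx0 : 0 < |x| := hx ▸ Real.rpow_pos_of_pos (abs_pos.mpr hξ) _
  have hξx : |ξ| = |x| ^ α := by
    rw [hx, one_div, Real.rpow_inv_rpow (abs_nonneg ξ) (by positivity)]
  have hden : |ξ| ^ ((α - 1) / α) = |x| ^ (α - 1) := by
    rw [hx, ← Real.rpow_mul (abs_nonneg ξ), one_div_mul_eq_div]
  have hweight := one_add_rpow_add_le_mul_pow hα.le hN.le hK hx0.le (abs_nonneg η)
  rw [← hξx] at hweight
  have hgx := hbound x (abs_pos.mp hx0) η
  rw [Real.norm_eq_abs, Real.norm_eq_abs] at hgx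
  rw [hF ξ hξ η, hden, ← hg, abs_div, abs_of_pos (by positivity : 0 < α * |x| ^ (α - 1)),
    Real.rpow_neg (by positivity), ← div_eq_mul_inv, div_le_div_iff₀ (by positivity) (by positivity)]
  calc |g (x, η)| * (1 + |ξ| + |η|) ^ N ≤ |g (x, η)| * (3 ^ N * (1 + |x| + |η|) ^ K) := by gcongr
    _ = 3 ^ N * (|g (x, η)| * (1 + |x| + |η|) ^ K) := by ring
    _ ≤ 3 ^ N * (C * |x| ^ (α - 1)) := by gcongr
    _ = 3 ^ N * C / α * (α * |x| ^ (α - 1)) := by field_simp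
end

section
/- Let α > 1, c ∈ ℝ, and f ∈ 𝒮(ℝ²) with (∂^k f/∂x^k)(c,y) = 0 for k = 0,…,m where m ≥ α - 2. Define Q_α f(s,u) = ∫_ℝ f(x+c, s x|x|^{α-1} + u) dx and F_α(ξ,η) = f(sgn(ξ)|ξ|^{1/α}+c, η)/(α|ξ|^{(α-1)/α}) for ξ ≠ 0. Then for all s, u ∈ ℝ: Q_α f(s,u) = ∫_ℝ F_α(ξ, sξ + u) dξ. -/
open MeasureTheory

/-! The map `x ↦ x |x|^(α-1) = sgn x |x|^α` is a differentiable increasing bijection of `ℝ` with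
derivative `α |x|^(α-1)` and inverse `ξ ↦ sgn ξ |ξ|^(1/α)`. Substituting `ξ = sgn x |x|^α` in the
integral of `F_α` along the line `η = sξ + u`, the Jacobian `α |x|^(α-1)` cancels the denominator
of `F_α` and leaves the integral of `f` along the curve `y = s x |x|^(α-1) + u`. -/

theorem integral_eq_integral_deriv_smul_comp {E : Type*} [NormedAddCommGroup E] [NormedSpace ℝ E]
    {f f' : ℝ → ℝ} (hf : ∀ x, HasDerivAt f (f' x) x) (hf' : 0 ≤ f')
    (hsurj : Function.Surjective f) (g : ℝ → E) :
    ∫ y, g y = ∫ x, f' x • g (f x) := by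
  simpa only [Set.image_univ, hsurj.range_eq, Measure.restrict_univ] using
    integral_image_eq_integral_deriv_smul_of_monotoneOn MeasurableSet.univ
      (fun x _ => (hf x).hasDerivWithinAt)
      ((monotone_of_hasDerivAt_nonneg hf hf').monotoneOn _) g

noncomputable def signedRpow (p x : ℝ) : ℝ := Real.sign x * |x| ^ p

lemma Real.sign_mul_abs (x : ℝ) : Real.sign x * |x| = x := by
  rcases lt_trichotomy x 0 with hx | rfl | hx
  · rw [Real.sign_of_neg hx, abs_of_neg hx]; ring
  · simp
  · rw [Real.sign_of_pos hx, abs_of_pos hx, one_mul]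

lemma mul_abs_rpow_sub_one_eq_signedRpow (p x : ℝ) : x * |x| ^ (p - 1) = signedRpow p x := by
  rcases eq_or_ne x 0 with rfl | hx
  · simp [signedRpow]
  · rw [signedRpow, Real.rpow_sub_one (abs_ne_zero.mpr hx)]
    nth_rewrite 1 [← Real.sign_mul_abs x]
    field_simp

lemma sign_signedRpow (p x : ℝ) : Real.sign (signedRpow p x) = Real.sign x := by
  rcases lt_trichotomy x 0 with hx | rfl | hx
  · have := Real.rpow_pos_of_pos (abs_pos.mpr hx.ne) p
    rw [signedRpow, Real.sign_of_neg hx, Real.sign_of_neg (by linarith)]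
  · simp [signedRpow]
  · have := Real.rpow_pos_of_pos (abs_pos.mpr hx.ne') p
    rw [signedRpow, Real.sign_of_pos hx, Real.sign_of_pos (by linarith)]

lemma abs_signedRpow {x : ℝ} (hx : x ≠ 0) (p : ℝ) : |signedRpow p x| = |x| ^ p := by
  rcases Real.sign_apply_eq_of_ne_zero x hx with h | h <;>
    simp [signedRpow, h, abs_of_nonneg (Real.rpow_nonneg (abs_nonneg x) p)]

lemma signedRpow_ne_zero {x : ℝ} (hx : x ≠ 0) (p : ℝ) : signedRpow p x ≠ 0 := by
  rw [Ne, ← Real.sign_eq_zero_iff, sign_signedRpow, Real.sign_eq_zero_iff]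
  exact hx

lemma signedRpow_signedRpow (p q x : ℝ) :
    signedRpow q (signedRpow p x) = signedRpow (p * q) x := by
  rcases eq_or_ne x 0 with rfl | hx
  · simp [signedRpow]
  · rw [signedRpow, sign_signedRpow, abs_signedRpow hx, ← Real.rpow_mul (abs_nonneg x),
      signedRpow]

lemma signedRpow_one (x : ℝ) : signedRpow 1 x = x := by
  rw [signedRpow, Real.rpow_one, Real.sign_mul_abs]

lemma signedRpow_surjective {p : ℝ} (hp : p ≠ 0) : Function.Surjective (signedRpow p) :=
  fun ξ => ⟨signedRpow p⁻¹ ξ, by rw [signedRpow_signedRpow, inv_mul_cancel₀ hp, signedRpow_one]⟩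

lemma hasDerivAt_signedRpow {p : ℝ} (hp : 1 < p) (x : ℝ) :
    HasDerivAt (signedRpow p) (p * |x| ^ (p - 1)) x := by
  rcases lt_trichotomy x 0 with hx | rfl | hx
  · have h := ((Real.hasDerivAt_rpow_const (x := -x) (Or.inr hp.le)).comp x
      (hasDerivAt_neg x)).neg
    rw [abs_of_neg hx]
    refine (h.congr_deriv (by ring)).congr_of_eventuallyEq ?_
    filter_upwards [Iio_mem_nhds hx] with y hy
    simp [signedRpow, Real.sign_of_neg (Set.mem_Iio.mp hy), abs_of_neg (Set.mem_Iio.mp hy)]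
  · -- the slope at `0` is `|y|^(p-1)`, which tends to `0` since `p > 1`
    have hp1 : 0 < p - 1 := by linarith
    rw [hasDerivAt_iff_tendsto_slope, abs_zero, Real.zero_rpow hp1.ne', mul_zero]
    have hcont : Continuous fun y : ℝ => |y| ^ (p - 1) :=
      continuous_abs.rpow_const fun _ => Or.inr hp1.le
    have := (hcont.tendsto 0).mono_left (nhdsWithin_le_nhds (s := {0}ᶜ))
    rw [abs_zero, Real.zero_rpow hp1.ne'] at this
    refine this.congr' ?_
    filter_upwards [self_mem_nhdsWithin] with y hy
    rw [slope_def_field, ← mul_abs_rpow_sub_one_eq_signedRpow,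
      ← mul_abs_rpow_sub_one_eq_signedRpow, zero_mul, sub_zero, sub_zero,
      mul_div_cancel_left₀ _ hy]
  · have h := Real.hasDerivAt_rpow_const (x := x) (Or.inr hp.le)
    rw [abs_of_pos hx]
    refine h.congr_of_eventuallyEq ?_
    filter_upwards [Ioi_mem_nhds hx] with y hy
    simp [signedRpow, Real.sign_of_pos (Set.mem_Ioi.mp hy), abs_of_pos (Set.mem_Ioi.mp hy)]

theorem Qalpha_eq_line_integral_general (α c : ℝ) (hα : 1 < α)
    (f : SchwartzMap (ℝ × ℝ) ℝ)
    (F : ℝ → ℝ → ℝ)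
    (hF : ∀ ξ : ℝ, ξ ≠ 0 → ∀ η : ℝ,
      F ξ η = f (Real.sign ξ * |ξ| ^ (1 / α) + c, η) / (α * |ξ| ^ ((α - 1) / α))) :
    ∀ s u : ℝ,
      (∫ x : ℝ, f (x + c, s * x * |x| ^ (α - 1) + u)) = ∫ ξ : ℝ, F ξ (s * ξ + u) := by
  intro s u
  have hα0 : 0 < α := by linarith
  rw [integral_eq_integral_deriv_smul_comp (hasDerivAt_signedRpow hα) (fun x => by positivity)
    (signedRpow_surjective hα0.ne') (fun ξ => F ξ (s * ξ + u))]
  refine integral_congr_ae ?_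
  filter_upwards [volume.ae_ne 0] with x hx
  have hjac : 0 < α * |x| ^ (α - 1) := by have := abs_pos.mpr hx; positivity
  rw [hF _ (signedRpow_ne_zero hx α), show Real.sign _ * _ = signedRpow (1 / α) (signedRpow α x)
    from rfl, signedRpow_signedRpow, mul_one_div_cancel hα0.ne', signedRpow_one,
    abs_signedRpow hx, ← Real.rpow_mul (abs_nonneg x), mul_div_cancel₀ _ hα0.ne', smul_eq_mul,
    mul_div_cancel₀ _ hjac.ne', mul_assoc, mul_abs_rpow_sub_one_eq_signedRpow]

/-- The change of variable `x = sgn ξ |ξ|^{1/α}` turns `Q_α f` into the integral of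
`F_α` over the line `η = sξ + u`. -/
theorem Qalpha_eq_line_integral (α c : ℝ) (hα : 1 < α) (m : ℕ) (hm : (m : ℝ) ≥ α - 2)
    (f : SchwartzMap (ℝ × ℝ) ℝ)
    (hvan : ∀ k ≤ m, ∀ y : ℝ, iteratedDeriv k (fun x : ℝ => f (x, y)) c = 0)
    (F : ℝ → ℝ → ℝ)
    (hF : ∀ ξ : ℝ, ξ ≠ 0 → ∀ η : ℝ,
      F ξ η = f (Real.sign ξ * |ξ| ^ (1 / α) + c, η) / (α * |ξ| ^ ((α - 1) / α))) :
    ∀ s u : ℝ,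
      (∫ x : ℝ, f (x + c, s * x * |x| ^ (α - 1) + u)) = ∫ ξ : ℝ, F ξ (s * ξ + u) :=
  Qalpha_eq_line_integral_general α c hα f F hF
end

section
/- Let α > 1, c ∈ ℝ, and f ∈ 𝒮(ℝ²) with f(x+c,y) = f(-x+c,y) for all x,y and (∂^k f/∂x^k)(c,y)=0 for k=0,…,m where m ≥ α - 2. Define P_α f(s,u) = ∫_ℝ f(x+c, s|x|^α + u) dx and F_α^P(ξ,η) = 2 f(ξ^{1/α}+c, η)/(α ξ^{(α-1)/α}) for ξ > 0 and 0 otherwise. Then P_α f(s,u) = ∫_ℝ F_α^P(ξ, sξ + u) dξ for all s, u. -/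
open MeasureTheory Set

/-!
Using the symmetry of `f` about `x = c`, the integral over `ℝ` is twice the integral over
`x > 0`, and there the substitution `ξ = x ^ α` (with `dξ = α ξ^((α-1)/α) dx`) produces the
integral of `F_α^P` along the line `η = sξ + u`.
-/

theorem integral_eq_two_mul_integral_Ioi_of_even {g : ℝ → ℝ} (hg : ∀ x, g (-x) = g x) :
    ∫ x, g x = 2 * ∫ x in Ioi 0, g x := by
  have hg_abs : ∀ x, g |x| = g x := fun x => by
    rcases abs_choice x with h | h <;> simp [h, hg]
  simpa only [hg_abs] using integral_comp_abs (f := g)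

theorem integral_Ioi_comp_rpow_eq_integral_Ioi_div {α : ℝ} (hα : 0 < α) (g : ℝ → ℝ → ℝ) :
    ∫ x in Ioi 0, g x (x ^ α) =
      ∫ ξ in Ioi 0, g (ξ ^ (1 / α)) ξ / (α * ξ ^ ((α - 1) / α)) := by
  symm
  rw [← integral_comp_rpow_Ioi_of_pos hα]
  refine setIntegral_congr_fun measurableSet_Ioi fun x (hx : 0 < x) => ?_
  have h_root : (x ^ α) ^ (1 / α) = x := by
    rw [one_div, Real.rpow_rpow_inv hx.le hα.ne']
  have h_pow : (x ^ α) ^ ((α - 1) / α) = x ^ (α - 1) := by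
    rw [← Real.rpow_mul hx.le]
    congr 1
    field_simp
  have : 0 < x ^ (α - 1) := Real.rpow_pos_of_pos hx _
  rw [h_root, h_pow, smul_eq_mul]
  field_simp

theorem Palpha_eq_line_integral_general (α c : ℝ) (hα : 1 < α)
    (f : SchwartzMap (ℝ × ℝ) ℝ)
    (hsym : ∀ x y : ℝ, f (x + c, y) = f (-x + c, y))
    (F : ℝ → ℝ → ℝ)
    (hF : ∀ ξ η : ℝ,
      F ξ η = if 0 < ξ then 2 * f (ξ ^ (1 / α) + c, η) / (α * ξ ^ ((α - 1) / α)) else 0) :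
    ∀ s u : ℝ,
      (∫ x : ℝ, f (x + c, s * |x| ^ α + u)) = ∫ ξ : ℝ, F ξ (s * ξ + u) := by
  intro s u
  have h_even : ∀ x : ℝ, f (-x + c, s * |-x| ^ α + u) = f (x + c, s * |x| ^ α + u) :=
    fun x => by rw [abs_neg, ← hsym]
  calc (∫ x : ℝ, f (x + c, s * |x| ^ α + u))
      = 2 * ∫ x in Ioi 0, f (x + c, s * |x| ^ α + u) :=
        integral_eq_two_mul_integral_Ioi_of_even h_even
    _ = ∫ x in Ioi 0, 2 * f (x + c, s * x ^ α + u) := by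
        rw [← integral_const_mul]
        refine setIntegral_congr_fun measurableSet_Ioi fun x (hx : 0 < x) => ?_
        rw [abs_of_pos hx]
    _ = ∫ ξ in Ioi 0, 2 * f (ξ ^ (1 / α) + c, s * ξ + u) / (α * ξ ^ ((α - 1) / α)) :=
        integral_Ioi_comp_rpow_eq_integral_Ioi_div (by linarith)
          fun x η => 2 * f (x + c, s * η + u)
    _ = ∫ ξ : ℝ, F ξ (s * ξ + u) := by
        rw [← integral_indicator measurableSet_Ioi]
        simp only [hF, indicator_apply, mem_Ioi]

/-- The change of variable `ξ = |x|^α` turns `P_α f` into the integral of `F_α^P` over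
the line `η = sξ + u`. -/
theorem Palpha_eq_line_integral (α c : ℝ) (hα : 1 < α) (m : ℕ) (hm : (m : ℝ) ≥ α - 2)
    (f : SchwartzMap (ℝ × ℝ) ℝ)
    (hsym : ∀ x y : ℝ, f (x + c, y) = f (-x + c, y))
    (hvan : ∀ k ≤ m, ∀ y : ℝ, iteratedDeriv k (fun x : ℝ => f (x, y)) c = 0)
    (F : ℝ → ℝ → ℝ)
    (hF : ∀ ξ η : ℝ,
      F ξ η = if 0 < ξ then 2 * f (ξ ^ (1 / α) + c, η) / (α * ξ ^ ((α - 1) / α)) else 0) :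
    ∀ s u : ℝ,
      (∫ x : ℝ, f (x + c, s * |x| ^ α + u)) = ∫ ξ : ℝ, F ξ (s * ξ + u) :=
  Palpha_eq_line_integral_general α c hα f hsym F hF
end

section
/- Let α, β > 1, c ∈ ℝ, and f ∈ 𝒮(ℝ²) with f(x+c,y)=f(-x+c,y)=f(x+c,-y), f(x+c,0)=0, and (∂^k f/∂x^k)(c,y)=0 for k=0,…,m with m ≥ α - 2. Define F(ξ,η) = 2 f(ξ^{1/α}+c, η^{1/β})/(α ξ^{(α-1)/α} η^{1/β}) for ξ, η > 0 and 0 otherwise. Then for every N > 0 there is C_N > 0 with |F(ξ,η)| ≤ C_N(1+|ξ|+|η|)^{-N} for all (ξ,η) ∈ ℝ². -/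
/-!
Substituting `ξ = u ^ α`, `η = v ^ β`, the claim is that `f (u + c, v) / (u ^ (α - 1) * v)`
decays rapidly in `(u, v)` for `u, v > 0`. Since `f` vanishes on `y = 0`, the mean value theorem
in `y` gives a factor `min |v| 1`; since `f` is flat to order `m` at `x = c`, Taylor's theorem in
`x` gives a factor `min |u| 1 ^ (m + 1)`, and `∂ₓ^(m+1) f` still vanishes on `y = 0`, so both
factors appear together, with arbitrary polynomial decay. As `m + 1 ≥ α - 1`, they absorb
the singular weight `u ^ (α - 1) * v`.
-/

open Set LineDeriv

theorem abs_le_mul_abs_sub_pow_of_iteratedDeriv_eq_zero {g : ℝ → ℝ} {c x M : ℝ} {m : ℕ}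
    (hg : ContDiff ℝ (m + 1) g) (hvan : ∀ k ≤ m, iteratedDeriv k g c = 0)
    (hM : ∀ t ∈ uIoo c x, |iteratedDeriv (m + 1) g t| ≤ M) :
    |g x| ≤ M * |x - c| ^ (m + 1) := by
  rcases eq_or_ne c x with rfl | hcx
  · simpa using hvan 0 (Nat.zero_le m)
  obtain ⟨t, ht, hrem⟩ := taylor_mean_remainder_lagrange_iteratedDeriv hcx hg.contDiffOn
  have htaylor : taylorWithinEval g m (uIcc c x) c x = 0 := by
    rw [taylor_within_apply]
    refine Finset.sum_eq_zero fun k hk => ?_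
    rw [iteratedDerivWithin_eq_iteratedDeriv (uniqueDiffOn_uIcc hcx)
      (hg.contDiffAt.of_le (by exact_mod_cast (Finset.mem_range.mp hk).le)) left_mem_uIcc,
      hvan k (Nat.lt_succ_iff.mp (Finset.mem_range.mp hk)), smul_zero]
  rw [htaylor, sub_zero] at hrem
  rw [hrem, abs_div, abs_mul, abs_pow, Nat.abs_cast]
  calc |iteratedDeriv (m + 1) g t| * |x - c| ^ (m + 1) / (m + 1).factorial
      ≤ |iteratedDeriv (m + 1) g t| * |x - c| ^ (m + 1) :=
        div_le_self (by positivity) (Nat.one_le_cast.mpr (Nat.factorial_pos _))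
    _ ≤ M * |x - c| ^ (m + 1) := by gcongr; exact hM t ht

namespace SchwartzMap

variable {E F : Type*} [NormedAddCommGroup E] [NormedSpace ℝ E]
  [NormedAddCommGroup F] [NormedSpace ℝ F]

theorem exists_one_add_norm_pow_mul_le (f : 𝓢(E, F)) (K : ℕ) :
    ∃ C, 0 < C ∧ ∀ x, (1 + ‖x‖) ^ K * ‖f x‖ ≤ C := by
  refine ⟨2 ^ K * (Finset.Iic (K, 0)).sup (fun m => SchwartzMap.seminorm ℝ m.1 m.2) f + 1,
    by positivity, fun x => ?_⟩
  have h := one_add_le_sup_seminorm_apply (𝕜 := ℝ) (m := (K, 0)) le_rfl le_rfl f x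
  rw [norm_iteratedFDeriv_zero] at h
  linarith

theorem hasDerivAt_apply_fst (φ : 𝓢(ℝ × ℝ, F)) (x y : ℝ) :
    HasDerivAt (fun x => φ (x, y)) (∂_{((1 : ℝ), (0 : ℝ))} φ (x, y)) x :=
  (φ.hasFDerivAt (x, y)).comp_hasDerivAt x ((hasDerivAt_id x).prodMk (hasDerivAt_const x y))

theorem hasDerivAt_apply_snd (φ : 𝓢(ℝ × ℝ, F)) (x y : ℝ) :
    HasDerivAt (fun y => φ (x, y)) (∂_{((0 : ℝ), (1 : ℝ))} φ (x, y)) y :=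
  (φ.hasFDerivAt (x, y)).comp_hasDerivAt y ((hasDerivAt_const y x).prodMk (hasDerivAt_id y))

theorem iteratedDeriv_apply_fst (φ : 𝓢(ℝ × ℝ, F)) (n : ℕ) (y : ℝ) :
    iteratedDeriv n (fun x => φ (x, y)) = fun x => (∂_{((1 : ℝ), (0 : ℝ))})^[n] φ (x, y) := by
  induction n generalizing φ with
  | zero => rfl
  | succ n ih =>
    rw [iteratedDeriv_succ', Function.iterate_succ_apply,
      ← ih (∂_{((1 : ℝ), (0 : ℝ))} φ)]
    congr 1
    exact funext fun x => (φ.hasDerivAt_apply_fst x y).deriv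

theorem exists_one_add_norm_pow_mul_le_of_apply_snd_zero (φ : 𝓢(ℝ × ℝ, F))
    (hφ : ∀ x, φ (x, 0) = 0) (K : ℕ) :
    ∃ C, 0 < C ∧ ∀ x y, (1 + ‖(x, y)‖) ^ K * ‖φ (x, y)‖ ≤ C * min |y| 1 := by
  obtain ⟨C₀, hC₀, h₀⟩ := φ.exists_one_add_norm_pow_mul_le K
  obtain ⟨C₁, hC₁, h₁⟩ := (∂_{((0 : ℝ), (1 : ℝ))} φ).exists_one_add_norm_pow_mul_le K
  refine ⟨2 ^ K * (C₀ + C₁), by positivity, fun x y => ?_⟩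
  rcases le_total |y| 1 with hy | hy
  · have hxK : 0 < (1 + |x|) ^ K := by positivity
    have hderiv : ∀ s, ‖∂_{((0 : ℝ), (1 : ℝ))} φ (x, s)‖ ≤ C₁ / (1 + |x|) ^ K := fun s => by
      rw [le_div_iff₀ hxK, mul_comm]
      refine le_trans ?_ (h₁ (x, s))
      gcongr
      exact norm_fst_le (x, s)
    have hmv := convex_univ.norm_image_sub_le_of_norm_hasDerivWithin_le
      (fun s _ => (φ.hasDerivAt_apply_snd x s).hasDerivWithinAt) (fun s _ => hderiv s)
      (mem_univ 0) (mem_univ y)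
    rw [hφ, sub_zero, sub_zero, Real.norm_eq_abs] at hmv
    have hnorm : 1 + ‖(x, y)‖ ≤ 2 * (1 + |x|) := by
      have : ‖(x, y)‖ ≤ |x| + 1 := norm_prod_le_iff.mpr
        ⟨le_add_of_nonneg_right zero_le_one, hy.trans (le_add_of_nonneg_left (abs_nonneg x))⟩
      linarith [abs_nonneg x]
    calc (1 + ‖(x, y)‖) ^ K * ‖φ (x, y)‖ ≤ (2 * (1 + |x|)) ^ K * (C₁ / (1 + |x|) ^ K * |y|) := by
          gcongr
      _ = 2 ^ K * C₁ * |y| := by rw [mul_pow]; field_simp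
      _ ≤ 2 ^ K * (C₀ + C₁) * min |y| 1 := by
        rw [min_eq_left hy]
        gcongr
        linarith
  · calc (1 + ‖(x, y)‖) ^ K * ‖φ (x, y)‖ ≤ C₀ := h₀ (x, y)
      _ ≤ 2 ^ K * (C₀ + C₁) * min |y| 1 := by
        rw [min_eq_right hy, mul_one]
        nlinarith [one_le_pow₀ (M₀ := ℝ) (a := 2) (n := K) (by norm_num)]

theorem exists_one_add_pow_mul_le_of_flat (f : 𝓢(ℝ × ℝ, ℝ)) (c : ℝ) (m K : ℕ)
    (h0 : ∀ x, f (x, 0) = 0) (hvan : ∀ k ≤ m, ∀ y, iteratedDeriv k (fun x => f (x, y)) c = 0) :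
    ∃ C, 0 < C ∧ ∀ u v, (1 + |u| + |v|) ^ K * |f (u + c, v)| ≤
      C * min |u| 1 ^ (m + 1) * min |v| 1 := by
  set φ := (∂_{((1 : ℝ), (0 : ℝ))})^[m + 1] f
  have hφ0 : ∀ x, φ (x, 0) = 0 := fun x => by
    rw [← congrFun (f.iteratedDeriv_apply_fst (m + 1) 0) x,
      show (fun x => f (x, 0)) = 0 from funext h0, iteratedDeriv_const_zero]
  obtain ⟨A, hA, hAφ⟩ := φ.exists_one_add_norm_pow_mul_le_of_apply_snd_zero hφ0 K
  obtain ⟨B, hB, hBf⟩ := f.exists_one_add_norm_pow_mul_le_of_apply_snd_zero h0 K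
  refine ⟨2 ^ K * A + (2 * (1 + |c|)) ^ K * B, by positivity, fun u v => ?_⟩
  rcases le_total |u| 1 with hu | hu
  · have hbound : ∀ t, |iteratedDeriv (m + 1) (fun x => f (x, v)) t| ≤
        A * min |v| 1 / (1 + |v|) ^ K := fun t => by
      simp only [f.iteratedDeriv_apply_fst]
      rw [le_div_iff₀ (by positivity), mul_comm]
      refine le_trans ?_ (hAφ t v)
      gcongr (1 + ?_) ^ K * ?_
      · exact norm_snd_le (t, v)
      · exact (Real.norm_eq_abs _).ge
    have htaylor := abs_le_mul_abs_sub_pow_of_iteratedDeriv_eq_zero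
      (g := fun x => f (x, v)) (x := u + c)
      ((f.smooth (m + 1)).comp (contDiff_id.prodMk contDiff_const))
      (fun k hk => hvan k hk v) (fun t _ => hbound t)
    rw [add_sub_cancel_right] at htaylor
    calc (1 + |u| + |v|) ^ K * |f (u + c, v)|
        ≤ (2 * (1 + |v|)) ^ K * (A * min |v| 1 / (1 + |v|) ^ K * |u| ^ (m + 1)) := by
          gcongr
          linarith [abs_nonneg v]
      _ = 2 ^ K * A * |u| ^ (m + 1) * min |v| 1 := by rw [mul_pow]; field_simp
      _ ≤ _ := by
          rw [min_eq_left hu]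
          gcongr
          exact le_add_of_nonneg_right (by positivity)
  · have hnorm : 1 + |u| + |v| ≤ 2 * (1 + |c|) * (1 + ‖(u + c, v)‖) := by
      have h1 : |u + c| ≤ ‖(u + c, v)‖ := norm_fst_le (u + c, v)
      have h2 : |v| ≤ ‖(u + c, v)‖ := norm_snd_le (u + c, v)
      have h3 : |u| ≤ |u + c| + |c| := by simpa using abs_sub (u + c) c
      nlinarith [abs_nonneg c, norm_nonneg (u + c, v)]
    calc (1 + |u| + |v|) ^ K * |f (u + c, v)|
        ≤ (2 * (1 + |c|)) ^ K * ((1 + ‖(u + c, v)‖) ^ K * ‖f (u + c, v)‖) := by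
          rw [← mul_assoc, ← mul_pow, Real.norm_eq_abs]
          gcongr
      _ ≤ (2 * (1 + |c|)) ^ K * (B * min |v| 1) := by gcongr ?_ * ?_; exact hBf _ _
      _ ≤ _ := by
          rw [min_eq_right hu, one_pow, mul_one, ← mul_assoc]
          gcongr
          exact le_add_of_nonneg_left (by positivity)

end SchwartzMap

theorem min_one_pow_le_rpow {u a : ℝ} {n : ℕ} (hu : 0 < u) (ha : 0 ≤ a) (han : a ≤ n) :
    min u 1 ^ n ≤ u ^ a := by
  rcases le_total u 1 with h | h
  · rw [min_eq_left h, ← Real.rpow_natCast]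
    exact Real.rpow_le_rpow_of_exponent_ge hu h han
  · rw [min_eq_right h, one_pow]
    exact Real.one_le_rpow h ha

theorem one_add_rpow_add_rpow_le {u v α β : ℝ} (hu : 0 ≤ u) (hv : 0 ≤ v) (hα : 0 ≤ α)
    (hβ : 0 ≤ β) : 1 + u ^ α + v ^ β ≤ 3 * (1 + u + v) ^ max α β := by
  have hW : 1 ≤ 1 + u + v := by linarith
  have h1 : 1 ≤ (1 + u + v) ^ max α β := Real.one_le_rpow hW (le_max_of_le_left hα)
  have hu' : u ^ α ≤ (1 + u + v) ^ max α β :=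
    (Real.rpow_le_rpow hu (by linarith) hα).trans
      (Real.rpow_le_rpow_of_exponent_le hW (le_max_left α β))
  have hv' : v ^ β ≤ (1 + u + v) ^ max α β :=
    (Real.rpow_le_rpow hv (by linarith) hβ).trans
      (Real.rpow_le_rpow_of_exponent_le hW (le_max_right α β))
  linarith

theorem one_add_rpow_add_rpow_rpow_le {u v α β N : ℝ} {K : ℕ} (hu : 0 ≤ u) (hv : 0 ≤ v)
    (hα : 0 ≤ α) (hβ : 0 ≤ β) (hN : 0 ≤ N) (hK : max α β * N ≤ K) :
    (1 + u ^ α + v ^ β) ^ N ≤ 3 ^ N * (1 + u + v) ^ K := by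
  have hW : 1 ≤ 1 + u + v := by linarith
  calc (1 + u ^ α + v ^ β) ^ N ≤ (3 * (1 + u + v) ^ max α β) ^ N := by
        gcongr
        exact one_add_rpow_add_rpow_le hu hv hα hβ
    _ = 3 ^ N * (1 + u + v) ^ (max α β * N) := by
        rw [Real.mul_rpow (by norm_num) (by positivity), ← Real.rpow_mul (by positivity)]
    _ ≤ 3 ^ N * (1 + u + v) ^ K := by
        rw [← Real.rpow_natCast]
        gcongr

theorem abs_div_le_of_vanishing_at_corner {g : ℝ → ℝ → ℝ} {α β C N ξ η : ℝ} {m K : ℕ}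
    (hα : 1 ≤ α) (hβ : 0 < β) (hm : α - 2 ≤ m) (hC : 0 ≤ C) (hN : 0 ≤ N) (hK : max α β * N ≤ K)
    (hg : ∀ u v, 0 < u → 0 < v → (1 + u + v) ^ K * |g u v| ≤ C * min u 1 ^ (m + 1) * min v 1)
    (hξ : 0 < ξ) (hη : 0 < η) :
    |2 * g (ξ ^ (1 / α)) (η ^ (1 / β)) / (α * ξ ^ ((α - 1) / α) * η ^ (1 / β))| ≤
      2 * C * 3 ^ N / α * (1 + ξ + η) ^ (-N) := by
  have hα₀ : 0 < α := zero_lt_one.trans_le hα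
  set u := ξ ^ (1 / α)
  set v := η ^ (1 / β)
  have hu : 0 < u := Real.rpow_pos_of_pos hξ _
  have hv : 0 < v := Real.rpow_pos_of_pos hη _
  have hξu : ξ = u ^ α := by
    rw [← Real.rpow_mul hξ.le, one_div, inv_mul_cancel₀ hα₀.ne', Real.rpow_one]
  have hηv : η = v ^ β := by
    rw [← Real.rpow_mul hη.le, one_div, inv_mul_cancel₀ hβ.ne', Real.rpow_one]
  have hξα : ξ ^ ((α - 1) / α) = u ^ (α - 1) := by
    rw [← Real.rpow_mul hξ.le]
    congr 1
    field_simp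
  have hcorner : (1 + u + v) ^ K * |g u v| ≤ C * u ^ (α - 1) * v := by
    refine (hg u v hu hv).trans ?_
    gcongr
    · exact min_one_pow_le_rpow hu (by linarith) (by push_cast; linarith)
    · exact min_le_left v 1
  have hdecay : (1 + ξ + η) ^ N ≤ 3 ^ N * (1 + u + v) ^ K := by
    rw [hξu, hηv]
    exact one_add_rpow_add_rpow_rpow_le hu.le hv.le hα₀.le hβ.le hN hK
  have hweighted : |g u v| * (1 + ξ + η) ^ N ≤ 3 ^ N * (C * u ^ (α - 1) * v) :=
    calc |g u v| * (1 + ξ + η) ^ N ≤ |g u v| * (3 ^ N * (1 + u + v) ^ K) := by gcongr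
      _ = 3 ^ N * ((1 + u + v) ^ K * |g u v|) := by ring
      _ ≤ 3 ^ N * (C * u ^ (α - 1) * v) := by gcongr
  have hD : 0 < α * u ^ (α - 1) * v := by positivity
  rw [hξα, Real.rpow_neg (by positivity), abs_div, abs_mul, abs_two, abs_of_pos hD,
    div_le_iff₀ hD]
  field_simp
  linarith

theorem FR_decay_general (α β c : ℝ) (hα : 1 < α) (hβ : 1 < β)
    (m : ℕ) (hm : (m : ℝ) ≥ α - 2)
    (f : SchwartzMap (ℝ × ℝ) ℝ)
    (h0 : ∀ x : ℝ, f (x + c, 0) = 0)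
    (hvan : ∀ k ≤ m, ∀ y : ℝ, iteratedDeriv k (fun x : ℝ => f (x, y)) c = 0)
    (F : ℝ → ℝ → ℝ)
    (hF : ∀ ξ η : ℝ,
      F ξ η = if 0 < ξ ∧ 0 < η then
        2 * f (ξ ^ (1 / α) + c, η ^ (1 / β)) / (α * ξ ^ ((α - 1) / α) * η ^ (1 / β))
      else 0) :
    ∀ N : ℝ, 0 < N → ∃ C : ℝ, 0 < C ∧
      ∀ ξ η : ℝ, |F ξ η| ≤ C * (1 + |ξ| + |η|) ^ (-N) := by
  intro N hN
  obtain ⟨C, hC, hfC⟩ := f.exists_one_add_pow_mul_le_of_flat c m ⌈max α β * N⌉₊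
    (fun x => by simpa using h0 (x - c)) hvan
  refine ⟨2 * C * 3 ^ N / α, by positivity, fun ξ η => ?_⟩
  rw [hF]
  split_ifs with hξη
  · rw [abs_of_pos hξη.1, abs_of_pos hξη.2]
    refine abs_div_le_of_vanishing_at_corner (g := fun u v => f (u + c, v)) hα.le
      (zero_lt_one.trans hβ) hm hC.le hN.le (Nat.le_ceil _) (fun u v hu hv => ?_) hξη.1 hξη.2
    simpa [abs_of_pos hu, abs_of_pos hv] using hfC u v
  · rw [abs_zero]
    positivity

/-- Rapid decay of `F_{α,β}^R`. -/
theorem FR_decay (α β c : ℝ) (hα : 1 < α) (hβ : 1 < β)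
    (m : ℕ) (hm : (m : ℝ) ≥ α - 2)
    (f : SchwartzMap (ℝ × ℝ) ℝ)
    (hsymx : ∀ x y : ℝ, f (x + c, y) = f (-x + c, y))
    (hsymy : ∀ x y : ℝ, f (x + c, y) = f (x + c, -y))
    (h0 : ∀ x : ℝ, f (x + c, 0) = 0)
    (hvan : ∀ k ≤ m, ∀ y : ℝ, iteratedDeriv k (fun x : ℝ => f (x, y)) c = 0)
    (F : ℝ → ℝ → ℝ)
    (hF : ∀ ξ η : ℝ,
      F ξ η = if 0 < ξ ∧ 0 < η then
        2 * f (ξ ^ (1 / α) + c, η ^ (1 / β)) / (α * ξ ^ ((α - 1) / α) * η ^ (1 / β))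
      else 0) :
    ∀ N : ℝ, 0 < N → ∃ C : ℝ, 0 < C ∧
      ∀ ξ η : ℝ, |F ξ η| ≤ C * (1 + |ξ| + |η|) ^ (-N) :=
  FR_decay_general α β c hα hβ m hm f h0 hvan F hF
end

section
/- Let α > 1, c ∈ ℝ, and f ∈ 𝒮(ℝ²) with f(x+c,y) = f(-x+c,y) for all x,y and (∂^k f/∂x^k)(c,y) = 0 for k = 0,…,m where m ≥ α - 2. Define F^P(ξ,η) = 2 f(ξ^{1/α}+c,η)/(α ξ^{(α-1)/α}) for ξ > 0 and 0 otherwise. Then for fixed s, u ∈ ℝ, as ξ → 0⁻ one has F^P(ξ, sξ+u) = 0, and as ξ → 0⁺: F^P(ξ, sξ+u) → 0 if m > α - 2, while F^P(ξ, sξ+u) → (2/(m+2)!) · (∂^{m+1} f/∂x^{m+1})(c, u) if m = α - 2. -/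
/-!
Writing `t = ξ ^ (1 / α)`, one has
`F^P(ξ, η) = (2 / α) ξ ^ ((m + 2 - α) / α) · f(t + c, η) / t ^ (m + 1)`.
Since the `x`-derivatives of `f` vanish at `x = c` up to order `m`, Taylor's formula with
Lagrange remainder writes `f(t + c, η) / t ^ (m + 1)` as `∂ₓ^(m+1) f(x', η) / (m + 1)!` for some
`x'` between `c` and `c + t`. Joint continuity of `∂ₓ^(m+1) f` makes this converge to
`∂ₓ^(m+1) f(c, u) / (m + 1)!` along `η = sξ + u`, and the prefactor tends to `0` when
`m > α - 2` and equals `2 / α = 2 / (m + 2)` when `m = α - 2`.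
-/

open Filter Set Topology

section IteratedDerivAlongLine

variable {𝕜 E F : Type*} [NontriviallyNormedField 𝕜] [NormedAddCommGroup E] [NormedSpace 𝕜 E]
  [NormedAddCommGroup F] [NormedSpace 𝕜 F]

theorem iteratedDeriv_comp_smul_add {f : E → F} {n : WithTop ℕ∞} (hf : ContDiff 𝕜 n f) {i : ℕ}
    (hi : i ≤ n) (v a : E) (t : 𝕜) :
    iteratedDeriv i (fun s : 𝕜 => f (s • v + a)) t =
      iteratedFDeriv 𝕜 i f (t • v + a) (fun _ => v) := by
  have hfa : ContDiff 𝕜 n (fun z => f (z + a)) := hf.comp (contDiff_id.add contDiff_const)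
  rw [iteratedDeriv_eq_iteratedFDeriv]
  have := (ContinuousLinearMap.toSpanSingleton 𝕜 v).iteratedFDeriv_comp_right hfa t hi
  simp only [Function.comp_def, ContinuousLinearMap.toSpanSingleton_apply] at this
  rw [this, ContinuousMultilinearMap.compContinuousLinearMap_apply, iteratedFDeriv_comp_add_right]
  simp

theorem iteratedDeriv_comp_prodMk_const {f : 𝕜 × 𝕜 → F} {n : WithTop ℕ∞} (hf : ContDiff 𝕜 n f)
    {i : ℕ} (hi : i ≤ n) (x y : 𝕜) :
    iteratedDeriv i (fun t => f (t, y)) x = iteratedFDeriv 𝕜 i f (x, y) (fun _ => (1, 0)) := by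
  simpa using iteratedDeriv_comp_smul_add hf hi (1, 0) (0, y) x

theorem continuous_iteratedDeriv_comp_prodMk {f : 𝕜 × 𝕜 → F} {n : WithTop ℕ∞} (hf : ContDiff 𝕜 n f)
    {i : ℕ} (hi : i ≤ n) :
    Continuous fun p : 𝕜 × 𝕜 => iteratedDeriv i (fun t => f (t, p.2)) p.1 := by
  simp only [iteratedDeriv_comp_prodMk_const hf hi]
  exact (ContinuousMultilinearMap.apply 𝕜 _ F _).continuous.comp (hf.continuous_iteratedFDeriv hi)

end IteratedDerivAlongLine

theorem exists_eq_iteratedDeriv_mul_pow_of_iteratedDeriv_eq_zero {g : ℝ → ℝ} {m : ℕ}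
    (hg : ContDiff ℝ (m + 1) g) {c : ℝ} (hvan : ∀ k ≤ m, iteratedDeriv k g c = 0) {x : ℝ}
    (hx : c ≠ x) :
    ∃ x' ∈ uIoo c x, g x = iteratedDeriv (m + 1) g x' * (x - c) ^ (m + 1) / (m + 1).factorial := by
  obtain ⟨x', hx', hEq⟩ := taylor_mean_remainder_lagrange_iteratedDeriv hx hg.contDiffOn
  refine ⟨x', hx', ?_⟩
  have htaylor : taylorWithinEval g m (uIcc c x) c x = 0 := by
    rw [taylor_within_apply]
    refine Finset.sum_eq_zero fun k hk => ?_
    rw [iteratedDerivWithin_eq_iteratedDeriv (uniqueDiffOn_uIcc hx)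
        (hg.contDiffAt.of_le (by exact_mod_cast (Finset.mem_range.mp hk).le)) left_mem_uIcc,
      hvan k (Nat.lt_succ_iff.mp (Finset.mem_range.mp hk))]
    simp
  rwa [htaylor, sub_zero] at hEq

theorem tendsto_div_pow_of_iteratedDeriv_eq_zero {f : ℝ × ℝ → ℝ} {m : ℕ} (hf : ContDiff ℝ (m + 1) f)
    {c u : ℝ} (hvan : ∀ k ≤ m, ∀ y, iteratedDeriv k (fun x => f (x, y)) c = 0)
    {ι : Type*} {l : Filter ι} {t y : ι → ℝ} (ht : Tendsto t l (𝓝[≠] 0)) (hy : Tendsto y l (𝓝 u)) :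
    Tendsto (fun i => f (t i + c, y i) / t i ^ (m + 1)) l
      (𝓝 (iteratedDeriv (m + 1) (fun x => f (x, u)) c / (m + 1).factorial)) := by
  set D := fun p : ℝ × ℝ => iteratedDeriv (m + 1) (fun x => f (x, p.2)) p.1
  have hmid : ∀ i, ∃ x', t i ≠ 0 → x' ∈ uIcc c (t i + c) ∧
      f (t i + c, y i) / t i ^ (m + 1) = D (x', y i) / (m + 1).factorial := by
    intro i
    by_cases hti : t i = 0
    · exact ⟨c, fun h => absurd hti h⟩
    obtain ⟨x', hx', hEq⟩ := exists_eq_iteratedDeriv_mul_pow_of_iteratedDeriv_eq_zero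
      (g := fun x => f (x, y i)) (hf.comp (contDiff_id.prodMk contDiff_const))
      (fun k hk => hvan k hk (y i))
      (x := t i + c) (by simpa [eq_comm] using hti)
    refine ⟨x', fun _ => ⟨uIoo_subset_uIcc_self hx', ?_⟩⟩
    rw [hEq, add_sub_cancel_right]
    field_simp
    rfl
  choose x' hx' using hmid
  have hne : ∀ᶠ i in l, t i ≠ 0 := ht self_mem_nhdsWithin
  have hx'c : Tendsto x' l (𝓝 c) := by
    rw [tendsto_iff_norm_sub_tendsto_zero]
    refine squeeze_zero' (.of_forall fun _ => norm_nonneg _) (hne.mono fun i hi => ?_)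
      (by simpa using (tendsto_nhds_of_tendsto_nhdsWithin ht).norm)
    simpa using abs_sub_left_of_mem_uIcc (hx' i hi).1
  have hD := (continuous_iteratedDeriv_comp_prodMk hf le_rfl).tendsto (c, u)
  exact ((hD.comp (hx'c.prodMk_nhds hy)).div_const _).congr'
    (hne.mono fun i hi => (hx' i hi).2.symm)

theorem tendsto_rpow_nhdsGT_zero {p : ℝ} (hp : 0 < p) :
    Tendsto (fun x : ℝ => x ^ p) (𝓝[>] 0) (𝓝[>] 0) := by
  refine tendsto_nhdsWithin_iff.mpr ⟨?_, eventually_nhdsWithin_of_forall fun x hx =>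
    Real.rpow_pos_of_pos hx p⟩
  simpa [Real.zero_rpow hp.ne'] using
    (Real.continuousAt_rpow_const 0 p (Or.inr hp.le)).tendsto.mono_left nhdsWithin_le_nhds

theorem two_mul_div_mul_rpow_eq {α ξ : ℝ} (hα : α ≠ 0) (hξ : 0 < ξ) (a : ℝ) (m : ℕ) :
    2 * a / (α * ξ ^ ((α - 1) / α))
      = 2 / α * ξ ^ (((m : ℝ) + 2 - α) / α) * (a / (ξ ^ (1 / α)) ^ (m + 1)) := by
  have hpow : (ξ ^ (1 / α)) ^ (m + 1) = ξ ^ ((α - 1) / α) * ξ ^ (((m : ℝ) + 2 - α) / α) := by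
    rw [← Real.rpow_natCast, ← Real.rpow_mul hξ.le, ← Real.rpow_add hξ]
    congr 1
    field_simp
    push_cast
    ring
  have := (Real.rpow_pos_of_pos hξ (((m : ℝ) + 2 - α) / α)).ne'
  rw [hpow]
  field_simp

theorem FP_limits_general (α c s u : ℝ) (hα : 1 < α) (m : ℕ)
    (f : SchwartzMap (ℝ × ℝ) ℝ)
    (hvan : ∀ k ≤ m, ∀ y : ℝ, iteratedDeriv k (fun x : ℝ => f (x, y)) c = 0)
    (F : ℝ → ℝ → ℝ)
    (hF : ∀ ξ η : ℝ,
      F ξ η = if 0 < ξ then 2 * f (ξ ^ (1 / α) + c, η) / (α * ξ ^ ((α - 1) / α)) else 0) :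
    (∀ ξ : ℝ, ξ < 0 → F ξ (s * ξ + u) = 0) ∧
    ((m : ℝ) > α - 2 →
      Tendsto (fun ξ : ℝ => F ξ (s * ξ + u)) (nhdsWithin 0 (Set.Ioi 0)) (nhds 0)) ∧
    ((m : ℝ) = α - 2 →
      Tendsto (fun ξ : ℝ => F ξ (s * ξ + u)) (nhdsWithin 0 (Set.Ioi 0))
        (nhds (2 / ((m + 2).factorial : ℝ) *
          iteratedDeriv (m + 1) (fun x : ℝ => f (x, u)) c))) := by
  have hα0 : 0 < α := by linarith
  have hroot := (tendsto_rpow_nhdsGT_zero (one_div_pos.mpr hα0)).mono_right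
    (nhdsWithin_mono 0 fun x (hx : 0 < x) => hx.ne')
  have hline : Tendsto (fun ξ : ℝ => s * ξ + u) (𝓝[>] 0) (𝓝 u) :=
    (Continuous.tendsto' (by fun_prop) 0 u (by simp)).mono_left nhdsWithin_le_nhds
  have hquot := tendsto_div_pow_of_iteratedDeriv_eq_zero (by exact_mod_cast f.smooth (m + 1)) hvan
    hroot hline
  have hFP : ∀ᶠ ξ in 𝓝[>] 0, 2 / α * ξ ^ (((m : ℝ) + 2 - α) / α) *
      (f (ξ ^ (1 / α) + c, s * ξ + u) / (ξ ^ (1 / α)) ^ (m + 1)) = F ξ (s * ξ + u) := by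
    filter_upwards [self_mem_nhdsWithin] with ξ (hξ : 0 < ξ)
    rw [hF, if_pos hξ, two_mul_div_mul_rpow_eq hα0.ne' hξ]
  refine ⟨fun ξ hξ => by rw [hF, if_neg hξ.not_gt], fun hgt => ?_, fun heq => ?_⟩
  · have hpow := (tendsto_rpow_nhdsGT_zero (p := ((m : ℝ) + 2 - α) / α)
      (div_pos (by linarith) hα0)).mono_right nhdsWithin_le_nhds
    simpa using ((hpow.const_mul (2 / α)).mul hquot).congr' hFP
  · obtain rfl : α = m + 2 := by linarith
    have hlim : 2 / ((m : ℝ) + 2) *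
          (iteratedDeriv (m + 1) (fun x => f (x, u)) c / (m + 1).factorial)
        = 2 / ((m + 2).factorial : ℝ) * iteratedDeriv (m + 1) (fun x => f (x, u)) c := by
      rw [Nat.factorial_succ (m + 1)]
      push_cast
      field_simp
      ring
    rw [← hlim]
    exact (hquot.const_mul _).congr' (hFP.mono fun ξ h => by simpa using h)

/-- One-sided limits of `F_α^P(ξ, sξ + u)` as `ξ → 0±`. -/
theorem FP_limits (α c s u : ℝ) (hα : 1 < α) (m : ℕ) (hm : (m : ℝ) ≥ α - 2)
    (f : SchwartzMap (ℝ × ℝ) ℝ)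
    (hsym : ∀ x y : ℝ, f (x + c, y) = f (-x + c, y))
    (hvan : ∀ k ≤ m, ∀ y : ℝ, iteratedDeriv k (fun x : ℝ => f (x, y)) c = 0)
    (F : ℝ → ℝ → ℝ)
    (hF : ∀ ξ η : ℝ,
      F ξ η = if 0 < ξ then 2 * f (ξ ^ (1 / α) + c, η) / (α * ξ ^ ((α - 1) / α)) else 0) :
    (∀ ξ : ℝ, ξ < 0 → F ξ (s * ξ + u) = 0) ∧
    ((m : ℝ) > α - 2 →
      Tendsto (fun ξ : ℝ => F ξ (s * ξ + u)) (nhdsWithin 0 (Set.Ioi 0)) (nhds 0)) ∧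
    ((m : ℝ) = α - 2 →
      Tendsto (fun ξ : ℝ => F ξ (s * ξ + u)) (nhdsWithin 0 (Set.Ioi 0))
        (nhds (2 / ((m + 2).factorial : ℝ) *
          iteratedDeriv (m + 1) (fun x : ℝ => f (x, u)) c))) :=
  FP_limits_general α c s u hα m f hvan F hF
end
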